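/- arXiv:2406.16015 — 2 statements merged into one kernel-verified Lean document; each statement's English description precedes it below -/
import Mathlib

section
/- Suppose G_1, …, G_m are finite subgraphs of the infinite path Path_ℤ with G_1 ∪ ⋯ ∪ G_m = Path_k and Δ⃗(G_1,…,G_m) = 1. Then there exists a shift permutation σ of {1,…,m} such that λ⃗(G_{σ(1)},…,G_{σ(m)}) ≥ k/4. -/
/-!
`Δ⃗ = 1` forces the first nonempty graph `G_t` to be an interval `[l, r]` and every component of a
later `G_j` to touch `G_1 ∪ ⋯ ∪ G_{j-1}`. So whenever `G_n` pushes the right end of the union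
further right, its rightmost component starts at most one step past the old right end, and these
components cover `[l, k]`. A greedy choice picks a subfamily of them, pairwise separated by a gap,
of total length at least `(k - l + 1) / 2`. Rotating each block `[previous choice + 1, next choice]`
by one step is a shift permutation; it brings each chosen graph to the front of its block, where
the chosen component is vertex-disjoint from everything before it and counts fully in `λ⃗`.
Mirroring the path gives a second shift permutation with `λ⃗ ≥ r / 2`, and the better of the two
has `λ⃗ ≥ (k + 1) / 4`.
-/

noncomputable section

/-- A finite subgraph of the infinite path `Path_ℤ`, identified with its (finite) edge set:
the integer `i` encodes the edge `{i-1, i}` of `Path_ℤ`. -/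
abbrev PGraph := Finset ℤ

/-- The connected component of the edge `i` in `G`: all edges `j ∈ G` such that every edge
lying between `i` and `j` also belongs to `G`. -/
def comp (G : PGraph) (i : ℤ) : PGraph :=
  G.filter fun j => ∀ l ∈ Finset.Icc (min i j) (max i j), l ∈ G

/-- `Δ(G)`: the number of connected components of `G`. -/
def Delta (G : PGraph) : ℕ := (G.filter fun i => i - 1 ∉ G).card

/-- `λ(G)`: the maximum number of edges of a connected component of `G`. -/
def lam (G : PGraph) : ℕ := G.sup fun i => (comp G i).card

/-- `G ⊖ F`: the union of the connected components of `G` that are vertex-disjoint from `F`.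
(The edges `{i-1,i}` and `{f-1,f}` share a vertex iff `|i - f| ≤ 1`.) -/
def ominus (G F : PGraph) : PGraph :=
  G.filter fun i => ∀ j ∈ comp G i, ∀ f ∈ F, 1 < (j - f).natAbs

/-- `Path_k`: the subgraph of `Path_ℤ` with edges `{i-1,i}` for `1 ≤ i ≤ k`. -/
def pathk (k : ℕ) : PGraph := Finset.Icc 1 (k : ℤ)

/-- `Δ⃗(G_1,…,G_m ∣ F)`. -/
def dvecFrom : PGraph → List PGraph → ℕ
  | _, [] => 0
  | F, G :: L => Delta (ominus G F) + dvecFrom (F ∪ G) L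

/-- `Δ⃗(G_1,…,G_m)`. -/
def dvec (L : List PGraph) : ℕ := dvecFrom ∅ L

def lvecFrom : PGraph → List PGraph → ℕ
  | _, [] => 0
  | F, G :: L => lam (ominus G F) + lvecFrom (F ∪ G) L

/-- `λ⃗(G_1,…,G_m)`. -/
def lvec (L : List PGraph) : ℕ := lvecFrom ∅ L

def ldvecFrom : PGraph → List PGraph → ℕ
  | _, [] => 0
  | F, G :: L => lam (ominus G F) * Delta (ominus G F) + ldvecFrom (F ∪ G) L

/-- `λΔ⃗(G_1,…,G_m)`. -/
def ldvec (L : List PGraph) : ℕ := ldvecFrom ∅ L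

/-- The sequence `G_1, …, G_m` as a list. -/
def seqList {m : ℕ} (G : Fin m → PGraph) : List PGraph := (List.finRange m).map G

/-- `G_1 ∪ ⋯ ∪ G_{j-1}` (the union of the entries strictly before `j`). -/
def unionBelow {m : ℕ} (G : Fin m → PGraph) (j : Fin m) : PGraph :=
  (Finset.univ.filter fun i => i < j).biUnion G

/-- A shift permutation: `σ(j) ≥ j - 1` for all `j`. -/
def IsShiftPerm {m : ℕ} (σ : Equiv.Perm (Fin m)) : Prop :=
  ∀ j : Fin m, (j : ℕ) ≤ (σ j : ℕ) + 1

open Finset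

section Components

variable {G F H : PGraph} {i j x : ℤ}

theorem mem_comp : j ∈ comp G i ↔ j ∈ G ∧ ∀ l ∈ Icc (min i j) (max i j), l ∈ G :=
  mem_filter

theorem comp_subset (G : PGraph) (i : ℤ) : comp G i ⊆ G :=
  filter_subset _ _

theorem self_mem_comp (h : i ∈ G) : i ∈ comp G i :=
  mem_comp.2 ⟨h, fun l hl => by
    rw [min_self, max_self, Icc_self, mem_singleton] at hl
    rwa [hl]⟩

theorem forall_mem_Icc_trans {a b c : ℤ} (hab : ∀ l ∈ Icc (min a b) (max a b), l ∈ G)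
    (hbc : ∀ l ∈ Icc (min b c) (max b c), l ∈ G) : ∀ l ∈ Icc (min a c) (max a c), l ∈ G := by
  intro l hl
  rw [mem_Icc] at hl
  by_cases h : min a b ≤ l ∧ l ≤ max a b
  · exact hab l (mem_Icc.2 h)
  · exact hbc l (mem_Icc.2 (by omega))

theorem comp_eq_of_mem (hj : j ∈ comp G i) : comp G j = comp G i := by
  have hij := (mem_comp.1 hj).2
  have hji : ∀ l ∈ Icc (min j i) (max j i), l ∈ G := by rwa [min_comm, max_comm]
  ext y
  simp only [mem_comp]
  exact ⟨fun ⟨hy, h⟩ => ⟨hy, forall_mem_Icc_trans hij h⟩,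
    fun ⟨hy, h⟩ => ⟨hy, forall_mem_Icc_trans hji h⟩⟩

theorem mem_comp_of_mem_Icc (hj : j ∈ comp G i) (hx : x ∈ Icc (min i j) (max i j)) :
    x ∈ comp G i := by
  have hij := (mem_comp.1 hj).2
  refine mem_comp.2 ⟨hij x hx, fun l hl => hij l ?_⟩
  simp only [mem_Icc] at hx hl ⊢
  omega

theorem comp_Icc {a b : ℤ} (hx : x ∈ Icc a b) : comp (Icc a b) x = Icc a b := by
  refine Subset.antisymm (comp_subset _ _) fun y hy => mem_comp.2 ⟨hy, fun l hl => ?_⟩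
  simp only [mem_Icc] at hx hy hl ⊢
  omega

theorem comp_eq_Icc_of_forall_le {ρ : ℤ} (hρ : ρ ∈ G) (hmax : ∀ z ∈ G, z ≤ ρ) :
    comp G ρ = Icc ((comp G ρ).min' ⟨ρ, self_mem_comp hρ⟩) ρ := by
  have hne : (comp G ρ).Nonempty := ⟨ρ, self_mem_comp hρ⟩
  refine Subset.antisymm (fun y hy => mem_Icc.2 ⟨min'_le _ _ hy, hmax y (comp_subset _ _ hy)⟩)
    fun y hy => mem_comp_of_mem_Icc (min'_mem _ hne) ?_
  have := min'_le _ _ (self_mem_comp hρ)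
  simp only [mem_Icc] at hy ⊢
  omega

theorem card_comp_le_lam (h : i ∈ G) : (comp G i).card ≤ lam G :=
  le_sup (f := fun i => (comp G i).card) h

theorem mem_ominus : i ∈ ominus G F ↔ i ∈ G ∧ ∀ j ∈ comp G i, ∀ f ∈ F, 1 < (j - f).natAbs :=
  mem_filter

theorem ominus_empty (G : PGraph) : ominus G ∅ = G := by
  ext i
  simp [mem_ominus]

theorem card_comp_le_lam_ominus (hi : i ∈ G)
    (hfar : ∀ j ∈ comp G i, ∀ f ∈ F, 1 < (j - f).natAbs) :
    (comp G i).card ≤ lam (ominus G F) := by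
  have hsub : comp G i ⊆ ominus G F := fun j hj =>
    mem_ominus.2 ⟨comp_subset _ _ hj, by rwa [comp_eq_of_mem hj]⟩
  have hsub' : comp G i ⊆ comp (ominus G F) i := fun j hj =>
    mem_comp.2 ⟨hsub hj, fun l hl => hsub (mem_comp_of_mem_Icc hj hl)⟩
  exact (card_le_card hsub').trans (card_comp_le_lam (hsub (self_mem_comp hi)))

theorem min'_mem_filter_sub_one_notMem (hne : H.Nonempty) :
    H.min' hne ∈ H.filter fun i => i - 1 ∉ H :=
  mem_filter.2 ⟨min'_mem _ _, fun h => by have := min'_le _ _ h; omega⟩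

theorem Delta_pos (hne : H.Nonempty) : 0 < Delta H :=
  card_pos.2 ⟨_, min'_mem_filter_sub_one_notMem hne⟩

theorem eq_empty_of_Delta_eq_zero (h : Delta H = 0) : H = ∅ :=
  not_nonempty_iff_eq_empty.1 fun hne => (Delta_pos hne).ne' h

theorem eq_Icc_of_Delta_eq_one (hne : H.Nonempty) (h : Delta H = 1) :
    H = Icc (H.min' hne) (H.max' hne) := by
  have hstep : ∀ y ∈ H, H.min' hne < y → y - 1 ∈ H := by
    intro y hy hlt
    by_contra hy'
    obtain ⟨a, ha⟩ := card_eq_one.1 h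
    have h₁ : y ∈ H.filter fun i => i - 1 ∉ H := mem_filter.2 ⟨hy, hy'⟩
    have h₂ := min'_mem_filter_sub_one_notMem hne
    rw [ha, mem_singleton] at h₁ h₂
    omega
  have hdown : ∀ d : ℕ, H.min' hne ≤ H.max' hne - d → H.max' hne - d ∈ H := by
    intro d
    induction d with
    | zero => simpa using fun _ => H.max'_mem hne
    | succ d ih =>
      intro hd
      have := hstep _ (ih (by omega)) (by omega)
      rwa [Nat.cast_succ, ← sub_sub]
  refine Subset.antisymm (fun y hy => mem_Icc.2 ⟨min'_le _ _ hy, le_max' _ _ hy⟩) fun y hy => ?_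
  rw [mem_Icc] at hy
  have := hdown (H.max' hne - y).toNat (by omega)
  rwa [Int.toNat_of_nonneg (by omega), sub_sub_cancel] at this

end Components

section Prefix

variable {m : ℕ}

/-- `unionBelow` with a cut-off in `ℕ`, so that the cut-off `p + 1` is allowed for every `p`. -/
def prefixUnion (G : Fin m → PGraph) (n : ℕ) : PGraph :=
  (univ.filter fun i : Fin m => (i : ℕ) < n).biUnion G

theorem mem_prefixUnion {G : Fin m → PGraph} {n : ℕ} {x : ℤ} :
    x ∈ prefixUnion G n ↔ ∃ i : Fin m, (i : ℕ) < n ∧ x ∈ G i := by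
  simp [prefixUnion]

theorem prefixUnion_zero (G : Fin m → PGraph) : prefixUnion G 0 = ∅ := by
  ext x
  simp [mem_prefixUnion]

theorem prefixUnion_succ (H : Fin (m + 1) → PGraph) (p : Fin m) :
    prefixUnion H (p + 1) = H 0 ∪ prefixUnion (fun j => H j.succ) p := by
  ext x
  simp [mem_prefixUnion, Fin.exists_fin_succ]

theorem seqList_succ (H : Fin (m + 1) → PGraph) :
    seqList H = H 0 :: seqList fun j => H j.succ := by
  simp only [seqList, ← List.ofFn_eq_map, List.ofFn_succ]

theorem seqList_recursion_eq_sum (V : PGraph → List PGraph → ℕ) (φ : PGraph → ℕ)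
    (hnil : ∀ F, V F [] = 0) (hcons : ∀ F A L, V F (A :: L) = φ (ominus A F) + V (F ∪ A) L) :
    ∀ {m : ℕ} (H : Fin m → PGraph) (F : PGraph),
      V F (seqList H) = ∑ p, φ (ominus (H p) (F ∪ prefixUnion H p))
  | 0, H, F => by simp [seqList, hnil]
  | m + 1, H, F => by
    rw [seqList_succ, hcons, seqList_recursion_eq_sum V φ hnil hcons, Fin.sum_univ_succ]
    simp only [Fin.val_zero, prefixUnion_zero, union_empty, Fin.val_succ, prefixUnion_succ,
      union_assoc]

theorem dvec_seqList (H : Fin m → PGraph) :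
    dvec (seqList H) = ∑ p, Delta (ominus (H p) (prefixUnion H p)) := by
  simpa [dvec] using seqList_recursion_eq_sum dvecFrom Delta (fun _ => rfl) (fun _ _ _ => rfl) H ∅

theorem lvec_seqList (H : Fin m → PGraph) :
    lvec (seqList H) = ∑ p, lam (ominus (H p) (prefixUnion H p)) := by
  simpa [lvec] using seqList_recursion_eq_sum lvecFrom lam (fun _ => rfl) (fun _ _ _ => rfl) H ∅

end Prefix

section ShiftPerm

variable {m : ℕ}

theorem Equiv.Perm.apply_mem_iff_of_forall_apply_eq {α : Type*} {σ : Equiv.Perm α} {s : Set α}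
    (h : ∀ x ∈ s, σ x = x) (x : α) : σ x ∈ s ↔ x ∈ s :=
  ⟨fun hx => by rwa [σ.injective (h _ hx)] at hx, fun hx => by rwa [h x hx]⟩

def PreservesBelow (σ : Equiv.Perm (Fin m)) (b : ℕ) : Prop :=
  ∀ p : Fin m, (σ p : ℕ) < b ↔ (p : ℕ) < b

instance (σ : Equiv.Perm (Fin m)) (b : ℕ) : Decidable (PreservesBelow σ b) :=
  inferInstanceAs (Decidable (∀ _ : Fin m, _))

theorem preservesBelow_of_forall_lt {σ : Equiv.Perm (Fin m)} {b : ℕ}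
    (h : ∀ p : Fin m, (p : ℕ) < b → σ p = p) : PreservesBelow σ b :=
  Equiv.Perm.apply_mem_iff_of_forall_apply_eq (s := {p : Fin m | (p : ℕ) < b}) fun p hp => h p hp

theorem preservesBelow_of_forall_le {σ : Equiv.Perm (Fin m)} {b : ℕ}
    (h : ∀ p : Fin m, b ≤ (p : ℕ) → σ p = p) : PreservesBelow σ b := fun p => by
  have := Equiv.Perm.apply_mem_iff_of_forall_apply_eq (s := {p : Fin m | b ≤ (p : ℕ)})
    (fun p hp => h p hp) p
  change b ≤ (σ p : ℕ) ↔ b ≤ (p : ℕ) at this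
  omega

theorem PreservesBelow.mul {σ τ : Equiv.Perm (Fin m)} {b : ℕ} (hσ : PreservesBelow σ b)
    (hτ : PreservesBelow τ b) : PreservesBelow (σ * τ) b :=
  fun p => (hσ (τ p)).trans (hτ p)

theorem prefixUnion_comp_of_preservesBelow (G : Fin m → PGraph) {σ : Equiv.Perm (Fin m)} {b : ℕ}
    (hσ : PreservesBelow σ b) : prefixUnion (fun j => G (σ j)) b = prefixUnion G b := by
  ext x
  simp only [mem_prefixUnion]
  constructor
  · rintro ⟨i, hi, hx⟩
    exact ⟨σ i, (hσ i).2 hi, hx⟩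
  · rintro ⟨i, hi, hx⟩
    exact ⟨σ.symm i, (hσ _).1 (by simpa using hi), by simpa using hx⟩

section cycleIcc

variable {a u p : Fin m}

theorem cycleIcc_inv_apply_of_lt (h : p < a) : (Fin.cycleIcc a u)⁻¹ p = p :=
  Equiv.Perm.inv_eq_iff_eq.2 (Fin.cycleIcc_of_lt h).symm

theorem cycleIcc_inv_apply_of_gt (h : u < p) : (Fin.cycleIcc a u)⁻¹ p = p :=
  Equiv.Perm.inv_eq_iff_eq.2 (Fin.cycleIcc_of_gt h).symm

theorem cycleIcc_inv_apply_left (h : a ≤ u) : (Fin.cycleIcc a u)⁻¹ a = u :=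
  have : NeZero m := NeZero.of_pos a.pos
  Equiv.Perm.inv_eq_iff_eq.2 (Fin.cycleIcc_of_last h).symm

theorem isShiftPerm_cycleIcc_inv (a u : Fin m) : IsShiftPerm (Fin.cycleIcc a u)⁻¹ := by
  intro j
  obtain ⟨q, rfl⟩ := (Fin.cycleIcc a u).surjective j
  rw [show (Fin.cycleIcc a u)⁻¹ (Fin.cycleIcc a u q) = q from Equiv.Perm.inv_eq_iff_eq.2 rfl]
  have : NeZero m := NeZero.of_pos a.pos
  by_cases hau : a ≤ u
  · rcases lt_or_ge q a with hqa | haq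
    · rw [Fin.cycleIcc_of_lt hqa]; omega
    rcases lt_or_ge u q with huq | hqu
    · rw [Fin.cycleIcc_of_gt huq]; omega
    rcases eq_or_lt_of_le hqu with rfl | hqu
    · rw [Fin.cycleIcc_of_last hau]; omega
    · rw [Fin.cycleIcc_of_ge_of_lt haq hqu, Fin.val_add_one_of_lt' (by omega)]
  · rw [Fin.cycleIcc_def_gt' hau]; simp

theorem isShiftPerm_cycleIcc_inv_mul {σ : Equiv.Perm (Fin m)} (hσ : IsShiftPerm σ)
    (hfix : ∀ p : Fin m, (p : ℕ) < u + 1 → σ p = p) : IsShiftPerm ((Fin.cycleIcc a u)⁻¹ * σ) := by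
  intro j
  rw [Equiv.Perm.mul_apply]
  by_cases hj : (j : ℕ) < u + 1
  · rw [hfix j hj]
    exact isShiftPerm_cycleIcc_inv a u j
  · have := preservesBelow_of_forall_lt hfix j
    rw [cycleIcc_inv_apply_of_gt (by rw [Fin.lt_def]; omega)]
    exact hσ j

end cycleIcc

/-- The permutation rotates each block `[a, idx i₁], [idx i₁ + 1, idx i₂], …` by one step. This
brings `G (idx iₖ)` to the front of its block, where it sees exactly the union of the earlier
blocks. -/
theorem exists_isShiftPerm_sum_le {α : Type*} (G : Fin m → PGraph) (idx : α → Fin m)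
    (w : α → ℕ) (L : List α) (a : ℕ)
    (hhead : ∀ i ∈ L.head?, a ≤ idx i ∧ w i ≤ lam (ominus (G (idx i)) (prefixUnion G a)))
    (hchain : L.IsChain fun i j =>
      idx i < idx j ∧ w j ≤ lam (ominus (G (idx j)) (prefixUnion G (idx i + 1)))) :
    ∃ σ : Equiv.Perm (Fin m), IsShiftPerm σ ∧ (∀ p : Fin m, (p : ℕ) < a → σ p = p) ∧
      (L.map w).sum ≤ ∑ p ∈ univ.filter (fun p : Fin m => a ≤ p ∧ PreservesBelow σ p),
        lam (ominus (G (σ p)) (prefixUnion G p)) := by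
  induction L generalizing a with
  | nil => exact ⟨1, fun j => by simp, fun _ _ => rfl, by simp⟩
  | cons i L ih =>
    obtain ⟨hai, hwi⟩ := hhead i rfl
    obtain ⟨σ', hshift', hfix', hsum'⟩ := ih (idx i + 1)
      (fun _ hj => hchain.rel_head? hj) hchain.tail
    set a' : Fin m := ⟨a, hai.trans_lt (idx i).isLt⟩
    set c := (Fin.cycleIcc a' (idx i))⁻¹
    set T := univ.filter fun p : Fin m => (idx i : ℕ) + 1 ≤ p ∧ PreservesBelow σ' p
    have hσ'_gt : ∀ p ∈ T, idx i < σ' p := fun p hp => by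
      have := preservesBelow_of_forall_lt hfix' p
      have := (mem_filter.1 hp).2.1
      rw [Fin.lt_def]
      omega
    have hfix : ∀ p : Fin m, (p : ℕ) < a → (c * σ') p = p := fun p hp => by
      rw [Equiv.Perm.mul_apply, hfix' p (by omega), cycleIcc_inv_apply_of_lt hp]
    refine ⟨c * σ', isShiftPerm_cycleIcc_inv_mul hshift' hfix', hfix, ?_⟩
    have hsub : insert a' T ⊆ univ.filter fun p : Fin m => a ≤ p ∧ PreservesBelow (c * σ') p := by
      refine insert_subset (mem_filter.2 ⟨mem_univ _, le_rfl, preservesBelow_of_forall_lt hfix⟩)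
        fun p hp => ?_
      obtain ⟨-, hp, hpσ'⟩ := mem_filter.1 hp
      refine mem_filter.2 ⟨mem_univ _, by omega, PreservesBelow.mul ?_ hpσ'⟩
      exact preservesBelow_of_forall_le fun q hq =>
        cycleIcc_inv_apply_of_gt (by rw [Fin.lt_def]; omega)
    have ha'_notMem : a' ∉ T := fun h => by
      have := (mem_filter.1 h).2.1
      simp only [a'] at this
      omega
    calc ((i :: L).map w).sum
        ≤ lam (ominus (G ((c * σ') a')) (prefixUnion G a')) +
          ∑ p ∈ T, lam (ominus (G (σ' p)) (prefixUnion G p)) := by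
          rw [List.map_cons, List.sum_cons, Equiv.Perm.mul_apply, hfix' a' (by simp [a']; omega),
            cycleIcc_inv_apply_left hai]
          exact add_le_add hwi hsum'
      _ = ∑ p ∈ insert a' T, lam (ominus (G ((c * σ') p)) (prefixUnion G p)) := by
          rw [sum_insert ha'_notMem]
          refine congrArg _ (sum_congr rfl fun p hp => ?_)
          rw [Equiv.Perm.mul_apply, cycleIcc_inv_apply_of_gt (hσ'_gt p hp)]
      _ ≤ _ := sum_le_sum_of_subset hsub

theorem exists_isShiftPerm_sum_le_lvec {α : Type*} (G : Fin m → PGraph) (idx : α → Fin m)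
    (w : α → ℕ) (L : List α) (hhead : ∀ i ∈ L.head?, w i ≤ lam (G (idx i)))
    (hchain : L.IsChain fun i j =>
      idx i < idx j ∧ w j ≤ lam (ominus (G (idx j)) (prefixUnion G (idx i + 1)))) :
    ∃ σ : Equiv.Perm (Fin m), IsShiftPerm σ ∧ (L.map w).sum ≤ lvec (seqList fun j => G (σ j)) := by
  obtain ⟨σ, hσ, -, hsum⟩ := exists_isShiftPerm_sum_le G idx w L 0
    (fun i hi => ⟨Nat.zero_le _, by rw [prefixUnion_zero, ominus_empty]; exact hhead i hi⟩) hchain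
  refine ⟨σ, hσ, hsum.trans ?_⟩
  rw [lvec_seqList]
  refine le_of_eq_of_le (sum_congr rfl fun p hp => ?_) (sum_le_sum_of_subset (subset_univ _))
  rw [prefixUnion_comp_of_preservesBelow G (mem_filter.1 hp).2.2]

end ShiftPerm

section Greedy

variable {ι : Type*} (P : ι → Prop) (left right : ι → ℤ)

/-- Greedy cover of `[x, β]`: take a piece through `x` reaching furthest right, then continue from
its right end. If `i₁, i₂, i₃` are consecutive choices, `i₃` starts beyond `right i₁ + 1`, since
otherwise it would have been chosen instead of `i₂`; so alternate choices form two separated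
chains. -/
theorem exists_two_separated_chains (β : ℤ) (hβ : ∀ i, P i → right i ≤ β) (n : ℕ) :
    ∀ x : ℤ, β - x < n → (∀ y, x ≤ y → y ≤ β → ∃ i, P i ∧ left i ≤ y ∧ y ≤ right i) →
    ∃ A B : List ι, (∀ i ∈ A, P i) ∧ (∀ i ∈ B, P i) ∧
      A.IsChain (fun i j => right i + 2 ≤ left j) ∧ B.IsChain (fun i j => right i + 2 ≤ left j) ∧
      β - x + 1 ≤ (A.map fun i => right i - left i + 1).sum +
        (B.map fun i => right i - left i + 1).sum ∧
      (∀ i ∈ A.head?, x ≤ right i) ∧ ∀ i ∈ B.head?, x < left i := by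
  induction n with
  | zero =>
    intro x hx _
    exact ⟨[], [], by simp, by simp, .nil, .nil, by simp; omega, by simp, by simp⟩
  | succ n ih =>
    intro x hx hcov
    rcases lt_or_ge β x with hβx | hxβ
    · exact ⟨[], [], by simp, by simp, .nil, .nil, by simp; omega, by simp, by simp⟩
    obtain ⟨_, ⟨i, hPi, hix, hxi, rfl⟩, hmax⟩ := Int.exists_greatest_of_bdd
      (P := fun z => ∃ i, P i ∧ left i ≤ x ∧ x ≤ right i ∧ right i = z)
      ⟨β, fun _ ⟨i, hi, _, _, hz⟩ => hz ▸ hβ i hi⟩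
      (let ⟨i, hi, h₁, h₂⟩ := hcov x le_rfl hxβ; ⟨_, i, hi, h₁, h₂, rfl⟩)
    obtain ⟨A, B, hA, hB, hAc, hBc, hlen, hAh, hBh⟩ :=
      ih (right i + 1) (by omega) fun y hy hyβ => hcov y (by omega) hyβ
    refine ⟨i :: B, A, ?_, hA, hBc.cons fun j hj => ?_, hAc, ?_, by simpa using hxi,
      fun j hj => ?_⟩
    · simpa using ⟨hPi, hB⟩
    · have := hBh j hj
      omega
    · simp only [List.map_cons, List.sum_cons]
      omega
    · have hxj := hAh j hj
      by_contra! hjx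
      have := hmax _ ⟨j, hA j (List.mem_of_mem_head? hj), hjx, by omega, rfl⟩
      omega

theorem exists_separated_chain (β x : ℤ) (hβ : ∀ i, P i → right i ≤ β)
    (hcov : ∀ y, x ≤ y → y ≤ β → ∃ i, P i ∧ left i ≤ y ∧ y ≤ right i) :
    ∃ L : List ι, (∀ i ∈ L, P i) ∧ L.IsChain (fun i j => right i + 2 ≤ left j) ∧
      β - x + 1 ≤ 2 * (L.map fun i => right i - left i + 1).sum := by
  obtain ⟨A, B, hA, hB, hAc, hBc, hlen, -, -⟩ :=
    exists_two_separated_chains P left right β hβ (β - x + 1).toNat x (by omega) hcov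
  rcases le_total (B.map fun i => right i - left i + 1).sum
    (A.map fun i => right i - left i + 1).sum with h | h
  · exact ⟨A, hA, hAc, by omega⟩
  · exact ⟨B, hB, hBc, by omega⟩

end Greedy

section Seeded

variable {m k : ℕ} {G : Fin m → PGraph}

structure IsRightmostComp (G : Fin m → PGraph) (n : Fin m) (c ρ : ℤ) : Prop where
  le : c ≤ ρ
  comp_eq : comp (G n) ρ = Icc c ρ
  le_of_mem_prefixUnion : ∀ z ∈ prefixUnion G (n + 1), z ≤ ρ

namespace IsRightmostComp

variable {n n' : Fin m} {c c' ρ ρ' : ℤ}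

theorem mem (h : IsRightmostComp G n c ρ) : ρ ∈ G n :=
  comp_subset _ _ (h.comp_eq ▸ right_mem_Icc.2 h.le)

theorem le_of_biUnion_eq (h : IsRightmostComp G n c ρ) (hcov : univ.biUnion G = pathk k) :
    ρ ≤ k := by
  have : ρ ∈ pathk k := hcov ▸ mem_biUnion.2 ⟨n, mem_univ _, h.mem⟩
  exact (mem_Icc.1 this).2

theorem lt_of_add_two_le (h : IsRightmostComp G n c ρ) (h' : IsRightmostComp G n' c' ρ')
    (hsep : ρ + 2 ≤ c') : n < n' := by
  by_contra! hle
  rw [Fin.le_def] at hle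
  have := h.le_of_mem_prefixUnion ρ' (mem_prefixUnion.2 ⟨n', by omega, h'.mem⟩)
  have := h'.le
  omega

theorem card_le_lam_ominus {F : PGraph} (h : IsRightmostComp G n c ρ)
    (hF : ∀ f ∈ F, f + 2 ≤ c) : (Icc c ρ).card ≤ lam (ominus (G n) F) := by
  rw [← h.comp_eq]
  refine card_comp_le_lam_ominus h.mem fun j hj f hf => ?_
  rw [h.comp_eq, mem_Icc] at hj
  have := hF f hf
  omega

end IsRightmostComp

/-- The shape forced by `Δ⃗ = 1`. -/
structure SeededAt (G : Fin m → PGraph) (t : Fin m) (l r : ℤ) : Prop where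
  le : l ≤ r
  eq_empty_of_lt : ∀ j < t, G j = ∅
  eq_Icc : G t = Icc l r
  ominus_eq_empty : ∀ j ≠ t, ominus (G j) (prefixUnion G j) = ∅

namespace SeededAt

variable {t : Fin m} {l r : ℤ}

theorem isRightmostComp (h : SeededAt G t l r) : IsRightmostComp G t l r := by
  refine ⟨h.le, by rw [h.eq_Icc]; exact comp_Icc (right_mem_Icc.2 h.le), fun z hz => ?_⟩
  obtain ⟨j, hj, hz⟩ := mem_prefixUnion.1 hz
  rcases lt_or_eq_of_le (Nat.lt_succ_iff.1 hj) with hj | hj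
  · rw [h.eq_empty_of_lt j hj] at hz
    exact absurd hz (notMem_empty z)
  · rw [Fin.ext hj, h.eq_Icc] at hz
    exact (mem_Icc.1 hz).2

theorem exists_le_add_one_of_ne (h : SeededAt G t l r) {n : Fin m} (hnt : n ≠ t) {ρ : ℤ}
    (hρ : ρ ∈ G n) : ∃ j ∈ comp (G n) ρ, ∃ f ∈ prefixUnion G n, j ≤ f + 1 := by
  by_contra! hfar
  have := mem_ominus.2 ⟨hρ, fun j hj f hf => by have := hfar j hj f hf; omega⟩
  rw [h.ominus_eq_empty n hnt] at this
  exact notMem_empty _ this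

/-- A point `y > r` is reached first by some `G n`; the component of `G n` at its maximum touches
an earlier graph, all of which lie left of `y`, so that component contains `y`. -/
theorem exists_isRightmostComp (h : SeededAt G t l r) (hcov : univ.biUnion G = pathk k)
    (y : ℤ) (hly : l ≤ y) (hyk : y ≤ k) :
    ∃ n c ρ, IsRightmostComp G n c ρ ∧ c ≤ y ∧ y ≤ ρ := by
  rcases le_or_gt y r with hyr | hry
  · exact ⟨t, l, r, h.isRightmostComp, hly, hyr⟩
  have hl : l ∈ pathk k := hcov ▸ mem_biUnion.2 ⟨t, mem_univ _, h.eq_Icc ▸ left_mem_Icc.2 h.le⟩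
  have hS : (univ.filter fun j => ∃ z ∈ G j, y ≤ z).Nonempty := by
    have : y ∈ univ.biUnion G := hcov ▸ mem_Icc.2 ⟨by linarith [(mem_Icc.1 hl).1], hyk⟩
    obtain ⟨j, -, hj⟩ := mem_biUnion.1 this
    exact ⟨j, mem_filter.2 ⟨mem_univ _, y, hj, le_rfl⟩⟩
  obtain ⟨n, hnS, hnmin⟩ := exists_min_image _ (fun j : Fin m => (j : ℕ)) hS
  obtain ⟨z, hz, hyz⟩ := (mem_filter.1 hnS).2
  have hbefore : ∀ j : Fin m, (j : ℕ) < n → ∀ x ∈ G j, x < y := fun j hj x hx => by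
    by_contra! hxy
    have := hnmin j (mem_filter.2 ⟨mem_univ _, x, hx, hxy⟩)
    omega
  set ρ := (G n).max' ⟨z, hz⟩
  have hρ : ρ ∈ G n := max'_mem _ _
  have hyρ : y ≤ ρ := hyz.trans (le_max' _ _ hz)
  have hnt : n ≠ t := by
    rintro hnt
    rw [hnt, h.eq_Icc, mem_Icc] at hz
    omega
  obtain ⟨j, hj, f, hf, hjf⟩ := h.exists_le_add_one_of_ne hnt hρ
  obtain ⟨i, hi, hfi⟩ := mem_prefixUnion.1 hf
  have hcj := min'_le _ j hj
  have hfy := hbefore i hi f hfi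
  refine ⟨n, _, ρ, ⟨min'_le _ _ (self_mem_comp hρ), comp_eq_Icc_of_forall_le hρ
    fun x hx => le_max' _ _ hx, fun x hx => ?_⟩, by omega, hyρ⟩
  obtain ⟨i', hi', hxi'⟩ := mem_prefixUnion.1 hx
  rcases lt_or_eq_of_le (Nat.lt_succ_iff.1 hi') with hi' | hi'
  · linarith [hbefore i' hi' x hxi']
  · rw [Fin.ext hi'] at hxi'
    exact le_max' _ _ hxi'

theorem exists_isShiftPerm_sub_le_two_mul_lvec (h : SeededAt G t l r)
    (hcov : univ.biUnion G = pathk k) :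
    ∃ σ : Equiv.Perm (Fin m), IsShiftPerm σ ∧
      (k : ℤ) - l + 1 ≤ 2 * (lvec (seqList fun j => G (σ j)) : ℤ) := by
  obtain ⟨L, hLP, hLsep, hLlen⟩ := exists_separated_chain
    (fun i : Fin m × ℤ × ℤ => IsRightmostComp G i.1 i.2.1 i.2.2) (fun i => i.2.1) (fun i => i.2.2)
    k l (fun i hi => hi.le_of_biUnion_eq hcov) fun y hly hyk => by
      obtain ⟨n, c, ρ, hp, hcy, hyρ⟩ := h.exists_isRightmostComp hcov y hly hyk
      exact ⟨(n, c, ρ), hp, hcy, hyρ⟩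
  obtain ⟨σ, hσ, hsum⟩ := exists_isShiftPerm_sum_le_lvec G Prod.fst
    (fun i => (Icc i.2.1 i.2.2).card) L
    (fun i hi => by
      have hi := hLP i (List.mem_of_mem_head? hi)
      rw [← hi.comp_eq]
      exact card_comp_le_lam hi.mem)
    ((List.IsChain.iff_mem.1 hLsep).imp fun i j ⟨hi, hj, hij⟩ =>
      ⟨(hLP i hi).lt_of_add_two_le (hLP j hj) hij, (hLP j hj).card_le_lam_ominus fun f hf => by
        linarith [(hLP i hi).le_of_mem_prefixUnion f hf]⟩)
  refine ⟨σ, hσ, hLlen.trans ?_⟩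
  have hcard : (L.map fun i => i.2.2 - i.2.1 + 1).sum =
      ((L.map fun i => (Icc i.2.1 i.2.2).card).sum : ℤ) := by
    rw [Nat.cast_list_sum, List.map_map]
    refine congrArg _ (List.map_congr_left fun i hi => ?_)
    have := (hLP i hi).le
    simp only [Function.comp_apply, Int.card_Icc]
    omega
  rw [hcard]
  exact_mod_cast Nat.mul_le_mul_left 2 hsum

end SeededAt

end Seeded

section Reflection

variable (s : ℤ) {G F : PGraph} {x : ℤ}

def reflect (G : PGraph) : PGraph := G.image (s - ·)

theorem mem_reflect : x ∈ reflect s G ↔ s - x ∈ G := by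
  simp only [reflect, mem_image]
  exact ⟨fun ⟨a, ha, hax⟩ => by rwa [← hax, sub_sub_cancel],
    fun h => ⟨s - x, h, sub_sub_cancel _ _⟩⟩

theorem card_reflect : (reflect s G).card = G.card :=
  card_image_of_injective _ sub_right_injective

theorem reflect_Icc (a b : ℤ) : reflect s (Icc a b) = Icc (s - b) (s - a) := by
  ext x
  simp only [mem_reflect, mem_Icc]
  omega

theorem comp_reflect : comp (reflect s G) x = reflect s (comp G (s - x)) := by
  ext y
  simp only [mem_reflect, mem_comp, mem_Icc]
  refine and_congr_right fun _ => ⟨fun h l hl => ?_, fun h l hl => h (s - l) (by omega)⟩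
  simpa using h (s - l) (by omega)

theorem ominus_reflect : ominus (reflect s G) (reflect s F) = reflect s (ominus G F) := by
  ext y
  simp only [mem_reflect, mem_ominus, comp_reflect]
  refine and_congr_right fun _ => ⟨fun h j hj f hf => ?_, fun h j hj f hf => ?_⟩
  · have := h (s - j) (by rwa [sub_sub_cancel]) (s - f) (by rwa [sub_sub_cancel])
    omega
  · have := h (s - j) hj (s - f) hf
    omega

theorem lam_reflect : lam (reflect s G) = lam G := by
  rw [lam, lam, reflect, sup_image]
  refine sup_congr rfl fun i _ => ?_
  show (comp (reflect s G) (s - i)).card = (comp G i).card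
  rw [comp_reflect, sub_sub_cancel, card_reflect]

variable {m : ℕ}

theorem prefixUnion_reflect (H : Fin m → PGraph) (n : ℕ) :
    prefixUnion (fun j => reflect s (H j)) n = reflect s (prefixUnion H n) := by
  ext x
  simp only [mem_reflect, mem_prefixUnion]

theorem lvec_reflect (H : Fin m → PGraph) :
    lvec (seqList fun j => reflect s (H j)) = lvec (seqList H) := by
  simp only [lvec_seqList, prefixUnion_reflect, ominus_reflect, lam_reflect]

theorem biUnion_reflect (H : Fin m → PGraph) :
    univ.biUnion (fun j => reflect s (H j)) = reflect s (univ.biUnion H) := by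
  ext x
  simp only [mem_reflect, mem_biUnion]

theorem SeededAt.reflect {H : Fin m → PGraph} {t : Fin m} {l r : ℤ} (h : SeededAt H t l r) :
    SeededAt (fun j => reflect s (H j)) t (s - r) (s - l) where
  le := by linarith [h.le]
  eq_empty_of_lt j hj := by simp [h.eq_empty_of_lt j hj, _root_.reflect]
  eq_Icc := by rw [h.eq_Icc, reflect_Icc]
  ominus_eq_empty j hj := by
    rw [prefixUnion_reflect, ominus_reflect, h.ominus_eq_empty j hj]
    rfl

end Reflection

variable {m k : ℕ} {G : Fin m → PGraph}

theorem SeededAt.exists_isShiftPerm_le_two_mul_lvec {t : Fin m} {l r : ℤ} (h : SeededAt G t l r)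
    (hcov : univ.biUnion G = pathk k) :
    ∃ σ : Equiv.Perm (Fin m), IsShiftPerm σ ∧ r ≤ 2 * (lvec (seqList fun j => G (σ j)) : ℤ) := by
  obtain ⟨σ, hσ, hle⟩ := (h.reflect (k + 1)).exists_isShiftPerm_sub_le_two_mul_lvec (k := k)
    (by rw [biUnion_reflect, hcov, pathk, reflect_Icc]; congr 1 <;> ring)
  refine ⟨σ, hσ, ?_⟩
  rw [lvec_reflect] at hle
  linarith

theorem exists_seededAt_of_dvec_eq_one (hdvec : dvec (seqList G) = 1) :
    ∃ t l r, SeededAt G t l r := by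
  rw [dvec_seqList] at hdvec
  have hne : (univ.filter fun j => (G j).Nonempty).Nonempty := by
    obtain ⟨j, -, hj⟩ := exists_ne_zero_of_sum_ne_zero (hdvec.trans_ne one_ne_zero)
    refine ⟨j, mem_filter.2 ⟨mem_univ _, ?_⟩⟩
    by_contra hGj
    rw [not_nonempty_iff_eq_empty] at hGj
    exact hj (by simp [Delta, ominus, hGj])
  obtain ⟨t, htS, htmin⟩ := exists_min_image _ (fun j : Fin m => (j : ℕ)) hne
  have hbefore : ∀ j < t, G j = ∅ := fun j hj => not_nonempty_iff_eq_empty.1 fun hGj => by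
    have := htmin j (mem_filter.2 ⟨mem_univ _, hGj⟩)
    rw [Fin.lt_def] at hj
    omega
  have hpre : prefixUnion G t = ∅ := by
    ext x
    simp only [mem_prefixUnion, notMem_empty, iff_false, not_exists, not_and]
    intro j hj
    rw [hbefore j hj]
    exact notMem_empty x
  have hGt : (G t).Nonempty := (mem_filter.1 htS).2
  have hsplit := add_sum_erase univ (fun p => Delta (ominus (G p) (prefixUnion G p))) (mem_univ t)
  rw [hdvec, hpre, ominus_empty] at hsplit
  have hpos := Delta_pos hGt
  have hzero : ∑ p ∈ univ.erase t, Delta (ominus (G p) (prefixUnion G p)) = 0 := by omega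
  have hrest : ∀ j ≠ t, Delta (ominus (G j) (prefixUnion G j)) = 0 := fun j hj =>
    sum_eq_zero_iff.1 hzero j (mem_erase.2 ⟨hj, mem_univ _⟩)
  exact ⟨t, _, _, ⟨min'_le _ _ (max'_mem _ hGt), hbefore,
    eq_Icc_of_Delta_eq_one hGt (by omega), fun j hj => eq_empty_of_Delta_eq_zero (hrest j hj)⟩⟩

/-- Comparing the two one-sided bounds: `2 λ⃗(σ₁) + 2 λ⃗(σ₂) ≥ (k - l + 1) + r ≥ k + 1`. -/
theorem pre_main_lemma_II_general (k m : ℕ) (G : Fin m → PGraph)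
    (hcov : Finset.univ.biUnion G = pathk k)
    (hdvec : dvec (seqList G) = 1) :
    ∃ σ : Equiv.Perm (Fin m), IsShiftPerm σ ∧
      (k : ℝ) / 4 ≤ (lvec (seqList fun j => G (σ j)) : ℝ) := by
  obtain ⟨t, l, r, h⟩ := exists_seededAt_of_dvec_eq_one hdvec
  obtain ⟨σ₁, hσ₁, h₁⟩ := h.exists_isShiftPerm_sub_le_two_mul_lvec hcov
  obtain ⟨σ₂, hσ₂, h₂⟩ := h.exists_isShiftPerm_le_two_mul_lvec hcov
  have hlr := h.le
  have hreal : ∀ σ : Equiv.Perm (Fin m), (k : ℤ) ≤ 4 * (lvec (seqList fun j => G (σ j)) : ℤ) →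
      (k : ℝ) / 4 ≤ (lvec (seqList fun j => G (σ j)) : ℝ) := fun σ hσ => by
    rw [div_le_iff₀ four_pos]
    exact_mod_cast (by linarith : (k : ℤ) ≤ lvec (seqList fun j => G (σ j)) * 4)
  rcases le_total (lvec (seqList fun j => G (σ₂ j))) (lvec (seqList fun j => G (σ₁ j))) with h | h
  · exact ⟨σ₁, hσ₁, hreal σ₁ (by omega)⟩
  · exact ⟨σ₂, hσ₂, hreal σ₂ (by omega)⟩

/-- **Pre-Main Lemma (II).**  If `G_1 ∪ ⋯ ∪ G_m = Path_k` and `Δ⃗(G_1,…,G_m) = 1`, then there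
is a shift permutation `σ` with `λ⃗(G_{σ(1)},…,G_{σ(m)}) ≥ k/4`. -/
theorem pre_main_lemma_II (k m : ℕ) (hk : 1 ≤ k) (G : Fin m → PGraph)
    (hcov : Finset.univ.biUnion G = pathk k)
    (hdvec : dvec (seqList G) = 1) :
    ∃ σ : Equiv.Perm (Fin m), IsShiftPerm σ ∧
      (k : ℝ) / 4 ≤ (lvec (seqList fun j => G (σ j)) : ℝ) :=
  pre_main_lemma_II_general k m G hcov hdvec
end
end

section
/- For all real numbers x_1, …, x_m, y_1, …, y_m ≥ 0 and every real number d > 1, max_{j∈{1,…,m}} ( (d−1)·x_j^{1/(d−1)} + Σ_{i=1}^j y_i ) ≥ d·( (1/e)·Σ_{j=1}^m x_j y_j )^{1/d}. -/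
/-!
Let `M` be the maximum and `u_j = M - (y_1 + ⋯ + y_j)`, so that `(d-1) x_j^{1/(d-1)} ≤ u_j` and
`u_{j-1} = u_j + y_j`. Hence `(d-1)^{d-1} x_j ≤ u_j^{d-1}`, and the tangent-line inequality for the
convex function `t ↦ t^d` gives `d (d-1)^{d-1} x_j y_j ≤ u_{j-1}^d - u_j^d`. Summing telescopes to
`d (d-1)^{d-1} ∑ x_j y_j ≤ M^d`, and `d^d ≤ e d (d-1)^{d-1}` because `(1 + 1/(d-1))^{d-1} ≤ e`.
-/

open Real Finset

theorem mul_rpow_sub_one_mul_le_rpow_add_sub_rpow {u y d : ℝ} (hu : 0 ≤ u) (hy : 0 ≤ y)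
    (hd : 1 ≤ d) : d * u ^ (d - 1) * y ≤ (u + y) ^ d - u ^ d := by
  rcases hy.eq_or_lt with rfl | hy
  · simp
  have h := (convexOn_rpow hd).deriv_le_slope (Set.mem_Ici.2 hu)
    (Set.mem_Ici.2 (by linarith : 0 ≤ u + y)) (by linarith)
    (hasDerivAt_rpow_const (Or.inr hd)).differentiableAt
  rwa [(hasDerivAt_rpow_const (Or.inr hd)).deriv, slope_def_field, add_sub_cancel_left,
    le_div_iff₀ hy] at h

theorem mul_mul_le_rpow_add_sub_rpow {x y u d : ℝ} (hx : 0 ≤ x) (hy : 0 ≤ y) (hd : 1 < d)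
    (hxu : (d - 1) * x ^ (1 / (d - 1)) ≤ u) :
    d * (d - 1) ^ (d - 1) * (x * y) ≤ (u + y) ^ d - u ^ d := by
  have hd1 : 0 < d - 1 := by linarith
  have hu : 0 ≤ u := le_trans (by positivity) hxu
  have hxu' : (d - 1) ^ (d - 1) * x ≤ u ^ (d - 1) := by
    calc (d - 1) ^ (d - 1) * x = ((d - 1) * x ^ (1 / (d - 1))) ^ (d - 1) := by
          rw [mul_rpow hd1.le (by positivity), ← rpow_mul hx, one_div_mul_cancel hd1.ne',
            rpow_one]
      _ ≤ u ^ (d - 1) := by gcongr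
  calc d * (d - 1) ^ (d - 1) * (x * y) = d * ((d - 1) ^ (d - 1) * x) * y := by ring
    _ ≤ d * u ^ (d - 1) * y := by gcongr
    _ ≤ (u + y) ^ d - u ^ d := mul_rpow_sub_one_mul_le_rpow_add_sub_rpow hu hy hd.le

theorem mul_sub_one_rpow_mul_sum_mul_le_rpow_sub_rpow {d M : ℝ} (hd : 1 < d) :
    ∀ {m : ℕ} (x y : Fin m → ℝ), (∀ j, 0 ≤ x j) → (∀ j, 0 ≤ y j) →
      (∀ j, (d - 1) * x j ^ (1 / (d - 1)) + ∑ i ∈ Iic j, y i ≤ M) →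
      d * (d - 1) ^ (d - 1) * ∑ j, x j * y j ≤ M ^ d - (M - ∑ j, y j) ^ d
  | 0, _, _, _, _, _ => by simp
  | m + 1, x, y, hx, hy, hM => by
    have hinit := mul_sub_one_rpow_mul_sum_mul_le_rpow_sub_rpow hd (fun j => x j.castSucc)
      (fun j => y j.castSucc) (fun j => hx _) (fun j => hy _)
      (fun j => by simpa only [Fin.sum_Iic_castSucc] using hM j.castSucc)
    have hlast : (d - 1) * x (Fin.last m) ^ (1 / (d - 1)) ≤
        M - ∑ j : Fin m, y j.castSucc - y (Fin.last m) := by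
      have h := hM (Fin.last m)
      rw [show Iic (Fin.last m) = univ from Iic_top, Fin.sum_univ_castSucc] at h
      linarith
    have hstep := mul_mul_le_rpow_add_sub_rpow (hx _) (hy (Fin.last m)) hd hlast
    rw [sub_add_cancel] at hstep
    rw [Fin.sum_univ_castSucc, Fin.sum_univ_castSucc y, mul_add, ← sub_sub]
    linarith

theorem mul_sub_one_rpow_mul_sum_mul_le_rpow {d M : ℝ} (hd : 1 < d) (hM : 0 ≤ M) {m : ℕ}
    (x y : Fin m → ℝ) (hx : ∀ j, 0 ≤ x j) (hy : ∀ j, 0 ≤ y j)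
    (hxy : ∀ j, (d - 1) * x j ^ (1 / (d - 1)) + ∑ i ∈ Iic j, y i ≤ M) :
    d * (d - 1) ^ (d - 1) * ∑ j, x j * y j ≤ M ^ d := by
  refine (mul_sub_one_rpow_mul_sum_mul_le_rpow_sub_rpow hd x y hx hy hxy).trans
    (sub_le_self _ (rpow_nonneg (sub_nonneg.2 ?_) d))
  cases m with
  | zero => simpa using hM
  | succ m =>
    have h := hxy (Fin.last m)
    rw [show Iic (Fin.last m) = univ from Iic_top] at h
    have hlast : 0 ≤ (d - 1) * x (Fin.last m) ^ (1 / (d - 1)) :=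
      mul_nonneg (by linarith) (rpow_nonneg (hx _) _)
    linarith

theorem one_add_inv_rpow_le_exp_one {t : ℝ} (ht : 0 < t) : (1 + t⁻¹) ^ t ≤ exp 1 :=
  calc (1 + t⁻¹) ^ t ≤ exp t⁻¹ ^ t := by
        gcongr
        linarith [add_one_le_exp t⁻¹]
    _ = exp 1 := by rw [← exp_mul, inv_mul_cancel₀ ht.ne']

theorem rpow_self_le_exp_one_mul {d : ℝ} (hd : 1 < d) :
    d ^ d ≤ exp 1 * (d * (d - 1) ^ (d - 1)) := by
  have hd1 : 0 < d - 1 := by linarith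
  calc d ^ d = d * ((d - 1) * (1 + (d - 1)⁻¹)) ^ (d - 1) := by
        rw [mul_one_add, mul_inv_cancel₀ hd1.ne', sub_add_cancel, rpow_sub_one (by positivity)]
        field_simp
    _ = d * (d - 1) ^ (d - 1) * (1 + (d - 1)⁻¹) ^ (d - 1) := by
        rw [mul_rpow hd1.le (by positivity)]
        ring
    _ ≤ d * (d - 1) ^ (d - 1) * exp 1 := by
        gcongr
        exact one_add_inv_rpow_le_exp_one hd1
    _ = exp 1 * (d * (d - 1) ^ (d - 1)) := mul_comm _ _

theorem numerical_inequality_general (m : ℕ) (x y : Fin m → ℝ)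
    (hx : ∀ j, 0 ≤ x j) (hy : ∀ j, 0 ≤ y j) (d : ℝ) (hd : 1 < d) :
    d * ((1 / Real.exp 1) * ∑ j, x j * y j) ^ (1 / d) ≤
      ⨆ j : Fin m, ((d - 1) * x j ^ (1 / (d - 1)) + ∑ i ∈ Finset.Iic j, y i) := by
  have hd0 : 0 < d := by linarith
  set M := ⨆ j : Fin m, ((d - 1) * x j ^ (1 / (d - 1)) + ∑ i ∈ Finset.Iic j, y i)
  have hM : 0 ≤ M := Real.iSup_nonneg fun j =>
    add_nonneg (mul_nonneg (by linarith) (rpow_nonneg (hx j) _)) (sum_nonneg fun i _ => hy i)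
  have hS := mul_sub_one_rpow_mul_sum_mul_le_rpow hd hM x y hx hy fun j =>
    le_ciSup (f := fun j => (d - 1) * x j ^ (1 / (d - 1)) + ∑ i ∈ Iic j, y i)
      (Set.finite_range _).bddAbove j
  have hS0 : 0 ≤ ∑ j, x j * y j := sum_nonneg fun j _ => mul_nonneg (hx j) (hy j)
  rw [← le_div_iff₀' hd0, one_div d, rpow_inv_le_iff_of_pos (by positivity) (by positivity) hd0,
    div_rpow hM hd0.le, one_div, inv_mul_le_iff₀ (exp_pos 1), ← mul_div_assoc,
    le_div_iff₀ (by positivity)]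
  calc (∑ j, x j * y j) * d ^ d ≤ (∑ j, x j * y j) * (exp 1 * (d * (d - 1) ^ (d - 1))) := by
        gcongr
        exact rpow_self_le_exp_one_mul hd
    _ = exp 1 * (d * (d - 1) ^ (d - 1) * ∑ j, x j * y j) := by ring
    _ ≤ exp 1 * M ^ d := by gcongr

/-- **Numerical inequality (Lemma 3.6).**  For all reals `x_1,…,x_m, y_1,…,y_m ≥ 0` and `d > 1`,
`max_j ((d−1)·x_j^{1/(d−1)} + Σ_{i≤j} y_i) ≥ d·((1/e)·Σ_j x_j y_j)^{1/d}`. -/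
theorem numerical_inequality (m : ℕ) (hm : 0 < m) (x y : Fin m → ℝ)
    (hx : ∀ j, 0 ≤ x j) (hy : ∀ j, 0 ≤ y j) (d : ℝ) (hd : 1 < d) :
    d * ((1 / Real.exp 1) * ∑ j, x j * y j) ^ (1 / d) ≤
      ⨆ j : Fin m, ((d - 1) * x j ^ (1 / (d - 1)) + ∑ i ∈ Finset.Iic j, y i) :=
  numerical_inequality_general m x y hx hy d hd
end
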